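/- Let G be a finite group with a non-abelian minimal normal subgroup M. Then M is contained in the kernel of every irreducible character of G of degree 2. -/

import Mathlib

open CategoryTheory BigOperators
open scoped Classical

noncomputable section

/-- `χ` is an irreducible complex character of the finite group `G`. -/
def IsIrrChar {G : Type} [Group G] [Fintype G] (χ : G → ℂ) : Prop :=
  ∃ V : FDRep ℂ G, Simple V ∧ χ = V.character

/-- The class function on `G` induced from the function `η` on the subgroup `H`. -/
def indChar {G : Type} [Group G] [Fintype G] (H : Subgroup G) (η : H → ℂ) : G → ℂ :=
  fun g => (Fintype.card H : ℂ)⁻¹ *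
    ∑ x : G, if h : x⁻¹ * g * x ∈ H then η ⟨x⁻¹ * g * x, h⟩ else 0

/-- `χ` is monomial: induced from a linear character of some subgroup. -/
def IsMonomial {G : Type} [Group G] [Fintype G] (χ : G → ℂ) : Prop :=
  ∃ (H : Subgroup G) (η : H →* ℂ), χ = indChar H fun h => η h

/-- `χ` is primitive: not induced from an (irreducible) character of a proper subgroup. -/
def IsPrimitive {G : Type} [Group G] [Fintype G] (χ : G → ℂ) : Prop :=
  ¬ ∃ (H : Subgroup G), H ≠ ⊤ ∧ ∃ η : H → ℂ, IsIrrChar η ∧ χ = indChar H η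

/-- The usual hermitian inner product of class functions. -/
def charInner {H : Type} [Group H] [Fintype H] (α β : H → ℂ) : ℂ :=
  (Fintype.card H : ℂ)⁻¹ * ∑ h, α h * (starRingEnd ℂ) (β h)

/-!
Let `V` afford `χ`. Averaging over the normal subgroup `M` gives a projection onto `V^M` that
commutes with `G`, so by Schur `V^M` is `0` or `V`; in the second case `M ≤ ker χ`. Otherwise
`M` acts faithfully (by minimality), and, being perfect, through `SL₂`. If `|M|` is even, an
involution of `M` acts as a scalar by Cayley–Hamilton, so it is central in `M`, yet `Z(M) = 1`.
If `|M|` is odd, squaring permutes `M`, and `χ(m⁻¹) = χ(m)`, `χ(m)² = χ(m²) + 2` give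
`⟨χ_M, χ_M⟩ = 2 + dim V^M ≥ 2`; hence a non-scalar endomorphism commutes with `M`, one of its
eigenlines is `M`-stable, and the perfect group `M` fixes it pointwise, contradicting `V^M = 0`.
-/

open Module Representation

namespace Group.IsPerfect

theorem map_eq_one {G A : Type*} [Group G] [IsPerfect G] [CommMonoid A] (f : G →* A) (g : G) :
    f g = 1 := by
  have hg := Abelianization.commutator_subset_ker f.toHomUnits (mem_commutator (g := g))
  simpa using congrArg Units.val (MonoidHom.mem_ker.mp hg)

end Group.IsPerfect

namespace Subgroup

variable {G : Type*} [Group G] {M : Subgroup G} [M.Normal]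

theorem isPerfect_of_minimal_normal
    (hmin : ∀ K : Subgroup G, K.Normal → K ≤ M → K = ⊥ ∨ K = M)
    (hna : ∃ a b : M, a * b ≠ b * a) : Group.IsPerfect M := by
  rw [isPerfect_iff]
  refine (hmin _ inferInstance (commutator_le_left M M)).resolve_left fun h => ?_
  obtain ⟨a, b, hab⟩ := hna
  exact hab (Subtype.ext
    (mem_centralizer_iff.mp (commutator_eq_bot_iff_le_centralizer.mp h a.2) b b.2).symm)

theorem center_eq_bot_of_minimal_normal
    (hmin : ∀ K : Subgroup G, K.Normal → K ≤ M → K = ⊥ ∨ K = M)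
    (hna : ∃ a b : M, a * b ≠ b * a) : center M = ⊥ := by
  have hZ : M ⊓ centralizer M = ⊥ := by
    refine (hmin _ inferInstance inf_le_left).resolve_right fun h => ?_
    obtain ⟨a, b, hab⟩ := hna
    have ha : (a : G) ∈ M ⊓ centralizer M := by rw [h]; exact a.2
    exact hab (Subtype.ext (mem_centralizer_iff.mp ha.2 b b.2).symm)
  rw [eq_bot_iff]
  intro z hz
  have hzZ : (z : G) ∈ M ⊓ centralizer M := ⟨z.2, mem_centralizer_iff.mpr fun x hx =>
    congrArg Subtype.val (mem_center_iff.mp hz ⟨x, hx⟩)⟩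
  rw [hZ, mem_bot] at hzZ
  exact Subtype.ext hzZ

end Subgroup

namespace LinearMap

variable {k V : Type*} [Field k] [AddCommGroup V] [Module k V]

theorem mul_self_eq_trace_smul_sub_det_smul (h2 : finrank k V = 2) (f : Module.End k V) :
    f * f = trace k V f • f - LinearMap.det f • 1 := by
  have : FiniteDimensional k V := .of_finrank_eq_succ h2
  let b := finBasisOfFinrankEq k V h2
  have hch := aeval_self_charpoly f
  rw [← charpoly_toMatrix f b, Matrix.charpoly_fin_two, ← trace_eq_matrix_trace,
    det_toMatrix] at hch
  simp only [map_add, map_sub, map_mul, pow_two, Polynomial.aeval_X, Polynomial.aeval_C,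
    Algebra.algebraMap_eq_smul_one, smul_mul_assoc, one_mul] at hch
  rw [← sub_eq_zero, ← hch]
  abel

end LinearMap

namespace Representation

variable {k H V : Type*} [Field k] [Group H] [AddCommGroup V] [Module k V]
  {ρ : Representation k H V}

variable (ρ) in
theorem invariants_comp_subtype_eq_top_iff (S : Subgroup H) :
    invariants (ρ.comp S.subtype) = ⊤ ↔ S ≤ ρ.ker := by
  constructor
  · intro h s hs
    ext v
    exact (h ▸ Submodule.mem_top : v ∈ invariants _) ⟨s, hs⟩
  · intro h
    rw [eq_top_iff]
    intro v _ s
    simp [MonoidHom.mem_ker.mp (h s.2)]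

variable (ρ) in
theorem isIntertwiningMap_averageMap_comp_subtype (S : Subgroup H) [S.Normal] [Fintype S]
    [Invertible (Fintype.card S : k)] :
    IsIntertwiningMap ρ ρ (averageMap (ρ.comp S.subtype)) := by
  constructor
  intro g v
  simp only [averageMap, GroupAlgebra.average, map_smul, map_sum, asAlgebraHom_of,
    LinearMap.smul_apply, LinearMap.coe_sum, Finset.sum_apply]
  congr 1
  refine Fintype.sum_equiv (MulAut.conjNormal g⁻¹).toEquiv _ _ fun s => ?_
  simp only [MonoidHom.coe_comp, Subgroup.coe_subtype, Function.comp_apply, MulEquiv.toEquiv_eq_coe,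
    MulEquiv.coe_toEquiv, MulAut.conjNormal_apply, ← Module.End.mul_apply, ← map_mul]
  group

theorem apply_inv_eq_of_det_eq_one (h2 : finrank k V = 2) {h : H}
    (hdet : LinearMap.det (ρ h) = 1) :
    ρ h⁻¹ = ρ.character h • 1 - ρ h := by
  have hch := congrArg (· * ρ h⁻¹) (LinearMap.mul_self_eq_trace_smul_sub_det_smul h2 (ρ h))
  simp only [hdet, one_smul, mul_assoc, ← map_mul, mul_inv_cancel, map_one, mul_one, sub_mul,
    smul_mul_assoc, one_mul] at hch
  exact eq_sub_of_add_eq' (eq_sub_iff_add_eq.mp hch)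

theorem character_inv_of_det_eq_one (h2 : finrank k V = 2) {h : H}
    (hdet : LinearMap.det (ρ h) = 1) : ρ.character h⁻¹ = ρ.character h := by
  have : FiniteDimensional k V := .of_finrank_eq_succ h2
  rw [character, apply_inv_eq_of_det_eq_one h2 hdet, map_sub, map_smul, LinearMap.trace_one, h2,
    ← character]
  simp only [smul_eq_mul, Nat.cast_ofNat]
  ring

theorem character_mul_self_of_det_eq_one (h2 : finrank k V = 2) {h : H}
    (hdet : LinearMap.det (ρ h) = 1) : ρ.character (h * h) = ρ.character h ^ 2 - 2 := by
  have : FiniteDimensional k V := .of_finrank_eq_succ h2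
  rw [character, map_mul, LinearMap.mul_self_eq_trace_smul_sub_det_smul h2, hdet, map_sub, map_smul,
    one_smul, LinearMap.trace_one, h2, ← character]
  simp only [smul_eq_mul, Nat.cast_ofNat]
  ring

theorem exists_eq_smul_one_of_mul_self_eq_one [NeZero (2 : k)] (h2 : finrank k V = 2) {t : H}
    (ht : t * t = 1) (hdet : LinearMap.det (ρ t) = 1) : ∃ c : k, ρ t = c • 1 := by
  have : Nontrivial V := Module.nontrivial_of_finrank_eq_succ h2
  have hch := LinearMap.mul_self_eq_trace_smul_sub_det_smul h2 (ρ t)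
  rw [← map_mul, ht, map_one, hdet, one_smul, eq_sub_iff_add_eq, ← two_smul k] at hch
  have htr : ρ.character t ≠ 0 := by
    intro h0
    rw [character] at h0
    rw [h0, zero_smul, smul_eq_zero] at hch
    exact hch.elim two_ne_zero one_ne_zero
  exact ⟨(ρ.character t)⁻¹ * 2, by rw [mul_smul, hch, ← character, inv_smul_smul₀ htr]⟩

theorem finrank_intertwiningMap_self_of_odd_card [CharZero k] [Fintype H]
    (h2 : finrank k V = 2) (hdet : ∀ h, LinearMap.det (ρ h) = 1) (hodd : Odd (Nat.card H)) :
    finrank k (IntertwiningMap ρ ρ) = finrank k ρ.invariants + 2 := by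
  have : FiniteDimensional k V := .of_finrank_eq_succ h2
  have hn : (Nat.card H : k) ≠ 0 := Nat.cast_ne_zero.mpr Nat.card_pos.ne'
  have : Invertible (Nat.card H : k) := invertibleOfNonzero hn
  have hsq : ∑ h : H, ρ.character (h * h) = ∑ h : H, ρ.character h := by
    simpa [powCoprime_apply, pow_two] using
      Equiv.sum_comp (powCoprime hodd.coprime_two_right) ρ.character
  have hsum :
      ∑ h, ρ.character h * ρ.character h⁻¹ = ∑ h, ρ.character h + Nat.card H * 2 := by
    calc _ = ∑ h, (ρ.character (h * h) + 2) := Finset.sum_congr rfl fun h _ => by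
            rw [character_inv_of_det_eq_one h2 (hdet h),
              character_mul_self_of_det_eq_one h2 (hdet h)]
            ring
      _ = _ := by
        rw [Finset.sum_add_distrib, hsq, Finset.sum_const, Finset.card_univ, nsmul_eq_mul,
          Fintype.card_eq_nat_card]
  have hnorm := card_inv_mul_sum_char_mul_char_eq_finrank ρ ρ
  rw [hsum, mul_add, card_inv_mul_sum_char_eq_finrank, inv_mul_cancel_left₀ hn] at hnorm
  exact_mod_cast hnorm.symm

variable (ρ) in
theorem apply_eq_one_of_finrank_eq_one [Group.IsPerfect H] (h1 : finrank k V = 1) (h : H) :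
    ρ h = 1 := by
  have : Module.Free k V := Module.Free.of_divisionRing k V
  obtain ⟨c, hc, -⟩ := LinearMap.existsUnique_eq_smul_id_of_finrank_eq_one h1 (ρ h)
  have hdet := Group.IsPerfect.map_eq_one (LinearMap.det.comp ρ) h
  rw [MonoidHom.comp_apply, hc, LinearMap.det_smul, LinearMap.det_id, h1, pow_one, mul_one] at hdet
  rw [hc, hdet, one_smul, Module.End.one_eq_id]

theorem exists_stable_line_of_one_lt_finrank_intertwiningMap [IsAlgClosed k]
    (h2 : finrank k V = 2) (hρ : 1 < finrank k (IntertwiningMap ρ ρ)) :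
    ∃ W : Submodule k V, finrank k W = 1 ∧ ∀ h, W ≤ W.comap (ρ h) := by
  have : FiniteDimensional k V := .of_finrank_eq_succ h2
  have : Nontrivial V := Module.nontrivial_of_finrank_eq_succ h2
  obtain ⟨f, -, hf⟩ := SetLike.exists_of_lt
    (span_lt_top_of_card_lt_finrank (s := {IntertwiningMap.id ρ}) (by simpa using hρ))
  obtain ⟨μ, hμ⟩ := Module.End.exists_eigenvalue f.toLinearMap
  set E := Module.End.eigenspace f.toLinearMap μ
  have hE : E ≠ ⊤ := fun hE => hf <| Submodule.mem_span_singleton.mpr ⟨μ, by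
    ext v
    have hv : v ∈ E := hE ▸ Submodule.mem_top
    exact (Module.End.mem_eigenspace_iff.mp hv).symm⟩
  refine ⟨E, ?_, fun h => ?_⟩
  · have hlt : finrank k E < 2 := h2 ▸ Submodule.finrank_lt hE
    have hpos : 1 ≤ finrank k E := Submodule.one_le_finrank_iff.mpr hμ
    omega
  · exact Module.End.mapsTo_genEigenspace_of_comm (f.isIntertwining' h) μ 1

variable (ρ) in
theorem invariants_ne_bot_of_odd_card [IsAlgClosed k] [CharZero k] [Fintype H]
    [Group.IsPerfect H] (h2 : finrank k V = 2) (hodd : Odd (Nat.card H)) :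
    ρ.invariants ≠ ⊥ := by
  have hdet h : LinearMap.det (ρ h) = 1 := Group.IsPerfect.map_eq_one (LinearMap.det.comp ρ) h
  obtain ⟨W, hW, hWρ⟩ := exists_stable_line_of_one_lt_finrank_intertwiningMap h2
    (by rw [finrank_intertwiningMap_self_of_odd_card h2 hdet hodd]; omega)
  have hWinv : W ≤ ρ.invariants := fun v hv h => congrArg Subtype.val <| LinearMap.congr_fun
    (apply_eq_one_of_finrank_eq_one (ρ.subrepresentation W hWρ) hW h) ⟨v, hv⟩
  intro hbot
  rw [hbot, le_bot_iff] at hWinv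
  rw [hWinv, finrank_bot] at hW
  exact zero_ne_one hW

theorem center_ne_bot_of_even_card [Finite H] [Group.IsPerfect H] [NeZero (2 : k)]
    (hρ : Function.Injective ρ) (h2 : finrank k V = 2) (heven : Even (Nat.card H)) :
    Subgroup.center H ≠ ⊥ := by
  obtain ⟨t, ht⟩ := exists_prime_orderOf_dvd_card' (G := H) 2 heven.two_dvd
  obtain ⟨c, hc⟩ := exists_eq_smul_one_of_mul_self_eq_one h2 (ρ := ρ)
    (by rw [← pow_two, ← ht, pow_orderOf_eq_one])
    (Group.IsPerfect.map_eq_one (LinearMap.det.comp ρ) t)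
  refine Subgroup.ne_bot_iff_exists_ne_one.mpr
    ⟨⟨t, Subgroup.mem_center_iff.mpr fun g => hρ ?_⟩, ?_⟩
  · rw [map_mul, map_mul, hc, smul_mul_assoc, mul_smul_comm, one_mul, mul_one]
  · intro h1
    rw [Subgroup.mk_eq_one] at h1
    rw [h1, orderOf_one] at ht
    omega

end Representation

namespace FDRep

variable {k G : Type*} [Field k] [IsAlgClosed k] [Group G]

theorem exists_eq_smul_one_of_isIntertwiningMap (V : FDRep k G) [Simple V] {f : V →ₗ[k] V}
    (hf : IsIntertwiningMap V.ρ V.ρ f) : ∃ c : k, f = c • 1 := by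
  have h1 : finrank k (linHom V.ρ V.ρ).invariants = 1 := by
    rw [(linHom.invariantsEquivFDRepHom V V).finrank_eq, finrank_hom_simple_simple,
      if_pos ⟨Iso.refl V⟩]
  have hmem {f : V →ₗ[k] V} (hf : IsIntertwiningMap V.ρ V.ρ f) :
      f ∈ (linHom V.ρ V.ρ).invariants :=
    (mem_linHom_invariants_iff_isIntertwining f).mpr hf
  by_cases h0 : (1 : V →ₗ[k] V) = 0
  · exact ⟨0, by rw [zero_smul, ← mul_one f, h0, mul_zero]⟩
  obtain ⟨c, hc⟩ := exists_smul_eq_of_finrank_eq_one h1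
    (x := ⟨1, hmem ⟨fun _ _ => rfl⟩⟩) (fun h => h0 (congrArg Subtype.val h)) ⟨f, hmem hf⟩
  exact ⟨c, (congrArg Subtype.val hc).symm⟩

theorem invariants_comp_subtype_eq_bot_or_eq_top [CharZero k] (V : FDRep k G) [Simple V]
    (S : Subgroup G) [S.Normal] [Finite S] :
    invariants (V.ρ.comp S.subtype) = ⊥ ∨ invariants (V.ρ.comp S.subtype) = ⊤ := by
  have := Fintype.ofFinite S
  have : Invertible (Fintype.card S : k) :=
    invertibleOfNonzero (Nat.cast_ne_zero.mpr Fintype.card_ne_zero)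
  obtain ⟨c, hc⟩ :=
    exists_eq_smul_one_of_isIntertwiningMap V (isIntertwiningMap_averageMap_comp_subtype V.ρ S)
  have hP := isProj_averageMap (V.ρ.comp S.subtype)
  rw [or_iff_not_imp_left, ← ne_eq, Submodule.ne_bot_iff]
  rintro ⟨v, hv, hv0⟩
  have hc1 : c = 1 := by
    have hcv := hP.map_id v hv
    rw [hc, LinearMap.smul_apply, Module.End.one_apply] at hcv
    exact smul_left_injective k hv0 (hcv.trans (one_smul k v).symm)
  rw [eq_top_iff]
  intro w _
  have hw := hP.map_mem w
  rwa [hc, hc1, one_smul, Module.End.one_apply] at hw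

end FDRep

theorem min_normal_nonabelian_in_ker_deg_two_general (G : Type) [Group G] [Fintype G]
    (M : Subgroup G) [M.Normal]
    (hmin : ∀ K : Subgroup G, K.Normal → K ≤ M → K = ⊥ ∨ K = M)
    (hna : ∃ a b : M, a * b ≠ b * a)
    (χ : G → ℂ) (hχ : IsIrrChar χ) (hdeg : χ 1 = 2) :
    ∀ m ∈ M, χ m = χ 1 := by
  obtain ⟨V, hV, rfl⟩ := hχ
  have h2 : finrank ℂ V = 2 := by exact_mod_cast (FDRep.char_one V).symm.trans hdeg
  have := M.isPerfect_of_minimal_normal hmin hna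
  set ρM : Representation ℂ M V := V.ρ.comp M.subtype
  rcases FDRep.invariants_comp_subtype_eq_bot_or_eq_top V M with hbot | htop
  · have : Nontrivial V := Module.nontrivial_of_finrank_eq_succ h2
    have hK : M ⊓ V.ρ.ker = ⊥ := (hmin _ inferInstance inf_le_left).resolve_right fun hMK =>
      bot_ne_top <| hbot.symm.trans <|
        (invariants_comp_subtype_eq_top_iff V.ρ M).mpr (inf_eq_left.mp hMK)
    have hfaithful : Function.Injective ρM := (injective_iff_map_eq_one ρM).mpr fun m hm =>
      Subtype.ext (Subgroup.mem_bot.mp (hK ▸ ⟨m.2, hm⟩))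
    exfalso
    rcases Nat.even_or_odd (Nat.card M) with heven | hodd
    · exact center_ne_bot_of_even_card hfaithful h2 heven
        (M.center_eq_bot_of_minimal_normal hmin hna)
    · exact invariants_ne_bot_of_odd_card ρM h2 hodd hbot
  · intro m hm
    have hm1 : V.ρ m = 1 := (invariants_comp_subtype_eq_top_iff V.ρ M).mp htop hm
    simp only [FDRep.character, hm1, map_one]

/-- A non-abelian minimal normal subgroup is in the kernel of every irreducible
character of degree 2. -/
theorem min_normal_nonabelian_in_ker_deg_two (G : Type) [Group G] [Fintype G]
    (M : Subgroup G) [M.Normal] (hM1 : M ≠ ⊥)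
    (hmin : ∀ K : Subgroup G, K.Normal → K ≤ M → K = ⊥ ∨ K = M)
    (hna : ∃ a b : M, a * b ≠ b * a)
    (χ : G → ℂ) (hχ : IsIrrChar χ) (hdeg : χ 1 = 2) :
    ∀ m ∈ M, χ m = χ 1 :=
  min_normal_nonabelian_in_ker_deg_two_general G M hmin hna χ hχ hdeg
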